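/- arXiv:1004.3051 — 5 statements merged into one kernel-verified Lean document; each statement's English description precedes it below -/
import Mathlib

section
/- Let 0 < ε ≤ 1/2 with 1/ε a positive integer. Consider a highway instance with n edges, m drivers D_1,…,D_m and budgets b_1,…,b_m. Let w* : Fin n → ℚ≥0 be a weight function and D* ⊆ {1,…,m} a set of indices such that w*(D_j) ≤ b_j for every j ∈ D*; set opt := Σ_{j∈D*} w*(D_j) and assume opt ≥ m/ε². Define w(e) := w*(e)/(1+ε) for every edge e. Then: (i) for every j ∈ D* with b_j ≥ 1/ε one has w(D_j) ≤ ⌊b_j⌋; and (ii) Σ_{j∈D*, b_j ≥ 1/ε} w(D_j) ≥ (1−2ε)·opt. -/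
/-- Reduction to well-rounded instances of the highway problem: scaling the
optimal weights by `1/(1+ε)` keeps every driver of budget at least `1/ε`
feasible for the floored budgets, while losing at most a factor `1-2ε`
of the optimal profit. -/
theorem highway_budget_rounding (ε : ℚ) (hε : 0 < ε) (hε2 : ε ≤ 1 / 2)
    (k : ℕ) (hk : 0 < k) (hke : 1 / ε = (k : ℚ))
    (n m : ℕ) (D : Fin m → Finset (Fin n)) (b : Fin m → ℚ)
    (hD : ∀ j, ∃ lo hi : Fin n, lo ≤ hi ∧ D j = Finset.Icc lo hi)
    (hb : ∀ j, 0 ≤ b j)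
    (wstar : Fin n → ℚ) (hwstar : ∀ e, 0 ≤ wstar e)
    (Dstar : Finset (Fin m))
    (hfeas : ∀ j ∈ Dstar, ∑ e ∈ D j, wstar e ≤ b j)
    (opt : ℚ) (hopt : opt = ∑ j ∈ Dstar, ∑ e ∈ D j, wstar e)
    (hoptlb : (m : ℚ) / ε ^ 2 ≤ opt)
    (w : Fin n → ℚ) (hw : ∀ e, w e = wstar e / (1 + ε)) :
    (∀ j ∈ Dstar, 1 / ε ≤ b j → ∑ e ∈ D j, w e ≤ (⌊b j⌋ : ℚ)) ∧
      (1 - 2 * ε) * opt ≤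
        ∑ j ∈ Dstar.filter (fun j => 1 / ε ≤ b j), ∑ e ∈ D j, w e := by
  have hε1 : (0:ℚ) < 1 + ε := by linarith
  have hεk : ε * (k:ℚ) = 1 := by
    rw [← hke]; field_simp
  have hwsum : ∀ j, ∑ e ∈ D j, w e = (∑ e ∈ D j, wstar e) / (1+ε) := by
    intro j
    rw [Finset.sum_div]
    exact Finset.sum_congr rfl fun e _ => hw e
  have hoptnn : (0:ℚ) ≤ opt := by
    have h1 : (0:ℚ) ≤ (m:ℚ) / ε ^ 2 := div_nonneg (Nat.cast_nonneg m) (sq_nonneg ε)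
    linarith
  have part1 : ∀ j ∈ Dstar, 1 / ε ≤ b j → ∑ e ∈ D j, w e ≤ (⌊b j⌋ : ℚ) := by
    intro j hj hbj
    have hkb : (k:ℚ) ≤ b j := by rw [← hke]; exact hbj
    have hfl : (k:ℚ) ≤ (⌊b j⌋:ℚ) := by
      have h2 : (k:ℤ) ≤ ⌊b j⌋ := Int.le_floor.mpr (by exact_mod_cast hkb)
      exact_mod_cast h2
    have hbfl : b j < (⌊b j⌋:ℚ) + 1 := Int.lt_floor_add_one _
    have hws : ∑ e ∈ D j, wstar e ≤ b j := hfeas j hj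
    rw [hwsum, div_le_iff₀ hε1]
    nlinarith [mul_nonneg hε.le (sub_nonneg.mpr hfl)]
  refine ⟨part1, ?_⟩
  set T := Dstar.filter (fun j => ¬ 1 / ε ≤ b j) with hT
  have hsplit := Finset.sum_filter_add_sum_filter_not Dstar (fun j => 1/ε ≤ b j)
    (fun j => ∑ e ∈ D j, wstar e)
  have hTcard : ((T.card : ℚ)) ≤ (m : ℚ) := by
    have h := (Finset.card_le_univ T).trans_eq (Finset.card_fin m)
    exact_mod_cast h
  have hTsum : ∑ j ∈ T, ∑ e ∈ D j, wstar e ≤ (T.card : ℚ) * (k:ℚ) := by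
    calc ∑ j ∈ T, ∑ e ∈ D j, wstar e ≤ ∑ j ∈ T, (k:ℚ) := by
          refine Finset.sum_le_sum fun j hj => ?_
          rw [hT, Finset.mem_filter] at hj
          have h1 : b j < (k:ℚ) := by rw [← hke]; exact lt_of_not_ge hj.2
          exact le_trans (hfeas j hj.1) h1.le
      _ = (T.card : ℚ) * (k:ℚ) := by rw [Finset.sum_const, nsmul_eq_mul]
  have hmopt : (m:ℚ) ≤ ε ^ 2 * opt := by
    rw [div_le_iff₀ (by positivity)] at hoptlb
    linarith
  have hTbound : ∑ j ∈ T, ∑ e ∈ D j, wstar e ≤ ε * opt := by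
    have h1 : (T.card : ℚ) * (k:ℚ) ≤ (m:ℚ) * (k:ℚ) := by
      exact mul_le_mul_of_nonneg_right hTcard (Nat.cast_nonneg k)
    have h2 : (m:ℚ) * (k:ℚ) ≤ ε ^ 2 * opt * (k:ℚ) :=
      mul_le_mul_of_nonneg_right hmopt (Nat.cast_nonneg k)
    nlinarith
  have hSsum : ∑ j ∈ Dstar.filter (fun j => 1 / ε ≤ b j), ∑ e ∈ D j, w e
      = (∑ j ∈ Dstar.filter (fun j => 1 / ε ≤ b j), ∑ e ∈ D j, wstar e) / (1+ε) := by
    rw [Finset.sum_div]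
    exact Finset.sum_congr rfl fun j _ => hwsum j
  rw [hSsum, le_div_iff₀ hε1]
  nlinarith [mul_nonneg (sq_nonneg ε) hoptnn]
end

section
/- Let 0 < ε ≤ 1/2 be a real number such that δ := 1/(2ε) is a positive integer. Let J be a finite index set, and for each j ∈ J let B_j ≥ 0 and b_j ≥ 0 be rationals, n_j ≥ δ an integer, and w'_j a rational with B_j·n_j ≤ b_j and B_j·n_j ≤ w'_j ≤ B_j·(n_j+2). Define w_j := (δ/(δ+2))·w'_j. Then w_j ≤ b_j for every j ∈ J, and Σ_{j∈J} w_j ≥ (1/(1+4ε))·Σ_{j∈J} B_j·n_j. -/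
/-- Abstract Scaling Lemma: scaling each good driver's weight `w'_j` by
`δ/(δ+2) = 1/(1+4ε)` makes every good driver budget-feasible while losing at
most a factor `1+4ε` of the shortened profit `Σ B_j·n_j`. -/
theorem scaling_lemma (ε : ℝ) (hε : 0 < ε) (hε2 : ε ≤ 1 / 2)
    (δ : ℕ) (hδ : 0 < δ) (hδε : (δ : ℝ) = 1 / (2 * ε))
    {ι : Type*} (J : Finset ι)
    (B b w' : ι → ℚ) (nj : ι → ℕ)
    (hB : ∀ j ∈ J, 0 ≤ B j) (hb : ∀ j ∈ J, 0 ≤ b j)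
    (hnj : ∀ j ∈ J, δ ≤ nj j)
    (hbud : ∀ j ∈ J, B j * nj j ≤ b j)
    (hlo : ∀ j ∈ J, B j * nj j ≤ w' j)
    (hhi : ∀ j ∈ J, w' j ≤ B j * (nj j + 2))
    (w : ι → ℚ) (hw : ∀ j ∈ J, w j = ((δ : ℚ) / ((δ : ℚ) + 2)) * w' j) :
    (∀ j ∈ J, w j ≤ b j) ∧
      (1 / (1 + 4 * ε)) * ∑ j ∈ J, ((B j : ℝ) * (nj j : ℝ)) ≤
        ∑ j ∈ J, ((w j : ℝ)) := by
  have hδQpos : (0 : ℚ) < (δ : ℚ) := by exact_mod_cast hδ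
  have hδ2pos : (0 : ℚ) < (δ : ℚ) + 2 := by linarith
  constructor
  · intro j hj
    rw [hw j hj]
    have h1 : ((δ : ℚ) / ((δ : ℚ) + 2)) * w' j ≤
        ((δ : ℚ) / ((δ : ℚ) + 2)) * (B j * (nj j + 2)) := by
      apply mul_le_mul_of_nonneg_left (hhi j hj)
      positivity
    have hn : (δ : ℚ) ≤ (nj j : ℚ) := by exact_mod_cast hnj j hj
    have h2 : ((δ : ℚ) / ((δ : ℚ) + 2)) * (B j * (nj j + 2)) ≤ B j * nj j := by
      rw [div_mul_eq_mul_div, div_le_iff₀ hδ2pos]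
      have hBj := hB j hj
      nlinarith
    linarith [hbud j hj, h1, h2]
  · have hkey : ((δ : ℝ) / ((δ : ℝ) + 2)) = 1 / (1 + 4 * ε) := by
      rw [hδε]
      field_simp
      ring
    have hsum : ∀ j ∈ J, (1 / (1 + 4 * ε)) * ((B j : ℝ) * (nj j : ℝ)) ≤ (w j : ℝ) := by
      intro j hj
      have hwj : (w j : ℝ) = ((δ : ℝ) / ((δ : ℝ) + 2)) * (w' j : ℝ) := by
        rw [hw j hj]; push_cast; ring
      rw [hwj, hkey.symm] at *
      have hlo' : ((B j : ℝ) * (nj j : ℝ)) ≤ (w' j : ℝ) := by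
        have := hlo j hj; exact_mod_cast this
      apply mul_le_mul_of_nonneg_left hlo'
      have : (0:ℝ) < (δ:ℝ) := by exact_mod_cast hδ
      positivity
    calc (1 / (1 + 4 * ε)) * ∑ j ∈ J, ((B j : ℝ) * (nj j : ℝ))
        = ∑ j ∈ J, (1 / (1 + 4 * ε)) * ((B j : ℝ) * (nj j : ℝ)) := by
          rw [Finset.mul_sum]
      _ ≤ ∑ j ∈ J, ((w j : ℝ)) := Finset.sum_le_sum hsum
end

section
/- Let ε > 0 be a real number such that δ := 1/(2ε) is a positive integer. Fix integers N ≥ 1 and γ ≥ 1, a partition of {1,…,N} into γ nonempty blocks P_1,…,P_γ of consecutive integers, a weight function w : {1,…,N} → ℚ≥0, and a rational W ≥ 0 with w(P_i) = W/γ for every i. Let D ⊆ {1,…,N} be an interval with n := #{i : P_i ⊆ D} ≥ δ, and set D^s := ∪_{P_i ⊆ D} P_i. If ℓ' and u are rationals with 0 ≤ ℓ' and ℓ'/(1+4ε) ≤ w(D^s) ≤ u, then ℓ'/(1+4ε) ≤ w(D) ≤ (1+4ε)·u. -/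
/-!
Every point of `D` outside `D^s` lies in a block that meets `D` without being contained in it.
Since blocks and `D` are intervals, such a block contains an endpoint of `D`, so there are at most
two of them and `w(D) ≤ w(D^s) + 2W/γ`. As `D^s` consists of `n ≥ δ` blocks,
`2W/γ = 4εδ · W/γ ≤ 4ε · w(D^s)`, which gives the upper bound; the lower bound is `D^s ⊆ D`.
-/

open Finset
open scoped Function

namespace Finset

theorem sum_union_le_sum_add_sum {ι R : Type*} [DecidableEq ι] [AddCommMonoid R] [PartialOrder R]
    [IsOrderedAddMonoid R] {f : ι → R} (hf : ∀ i, 0 ≤ f i) (s t : Finset ι) :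
    ∑ i ∈ s ∪ t, f i ≤ ∑ i ∈ s, f i + ∑ i ∈ t, f i :=
  (le_add_of_nonneg_right (sum_nonneg fun i _ => hf i)).trans_eq sum_union_inter

theorem mem_Ioc_left_or_right_of_not_subset_Icc {α : Type*} [LinearOrder α] [LocallyFiniteOrder α]
    {l r a b e : α} (he : e ∈ Ioc l r) (he' : e ∈ Icc a b) (h : ¬Ioc l r ⊆ Icc a b) :
    a ∈ Ioc l r ∨ b ∈ Ioc l r := by
  simp only [subset_iff, mem_Ioc, mem_Icc, not_forall, not_and_or, not_le] at h he he' ⊢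
  obtain ⟨x, ⟨hlx, hxr⟩, hxa | hbx⟩ := h
  · exact .inl ⟨hlx.trans hxa, he'.1.trans he.2⟩
  · exact .inr ⟨he.1.trans_le he'.2, hbx.le.trans hxr⟩

end Finset

section Dissection

variable {γ : ℕ} {c : Fin (γ + 1) → ℕ}

def dissectionBlock (c : Fin (γ + 1) → ℕ) (i : Fin γ) : Finset ℕ :=
  Ioc (c i.castSucc) (c i.succ)

-- The shortened driver `D^s` is the union of these blocks.
def innerBlocks (P : Fin γ → Finset ℕ) (D : Finset ℕ) : Finset (Fin γ) :=
  univ.filter fun i => P i ⊆ D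

theorem biUnion_innerBlocks_subset (P : Fin γ → Finset ℕ) (D : Finset ℕ) :
    (innerBlocks P D).biUnion P ⊆ D :=
  biUnion_subset.2 fun _ hi => (mem_filter.1 hi).2

theorem Monotone.pairwise_disjoint_dissectionBlock (hc : Monotone c) :
    Pairwise (Disjoint on dissectionBlock c) := by
  refine pairwise_disjoint_on _ |>.2 fun i j hij => Ioc_disjoint_Ioc_of_le (hc ?_)
  exact Fin.succ_le_castSucc_iff.2 hij

theorem Monotone.eq_of_mem_dissectionBlock (hc : Monotone c) {x : ℕ} {i j : Fin γ}
    (hi : x ∈ dissectionBlock c i) (hj : x ∈ dissectionBlock c j) : i = j := by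
  by_contra hij
  exact disjoint_left.1 (hc.pairwise_disjoint_dissectionBlock hij) hi hj

theorem exists_mem_dissectionBlock {x : ℕ} (hx : x ∈ Ioc (c 0) (c (Fin.last γ))) :
    ∃ i, x ∈ dissectionBlock c i := by
  rw [mem_Ioc] at hx
  -- the block ends at the first cut point `≥ x`
  set S : Finset (Fin (γ + 1)) := univ.filter fun k => x ≤ c k
  have hne : S.Nonempty := ⟨Fin.last γ, by simpa [S] using hx.2⟩
  set k := S.min' hne
  have hxk : x ≤ c k := (mem_filter.1 (min'_mem _ hne)).2
  obtain ⟨i, hik⟩ := Fin.exists_succ_eq.2 fun hk0 : k = 0 => by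
    rw [hk0] at hxk
    exact absurd hx.1 (not_lt.2 hxk)
  refine ⟨i, mem_Ioc.2 ⟨not_le.1 fun hle => ?_, hik ▸ hxk⟩⟩
  have : k ≤ i.castSucc := min'_le S _ (by simpa [S] using hle)
  exact absurd (hik ▸ this) (not_le.2 i.castSucc_lt_succ)

theorem sum_biUnion_dissectionBlock {R : Type*} [AddCommMonoid R] (hc : Monotone c)
    (s : Finset (Fin γ)) {w : ℕ → R} {m : R} (hm : ∀ i, ∑ e ∈ dissectionBlock c i, w e = m) :
    ∑ e ∈ s.biUnion (dissectionBlock c), w e = #s • m := by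
  rw [sum_biUnion (hc.pairwise_disjoint_dissectionBlock.set_pairwise _),
    sum_congr rfl fun i _ => hm i, sum_const]

variable {a b : ℕ}

theorem Icc_subset_biUnion_innerBlocks_union (hc : Monotone c)
    (hD : Icc a b ⊆ Ioc (c 0) (c (Fin.last γ))) {i j : Fin γ} (hi : a ∈ dissectionBlock c i)
    (hj : b ∈ dissectionBlock c j) :
    Icc a b ⊆ (innerBlocks (dissectionBlock c) (Icc a b)).biUnion (dissectionBlock c) ∪
      (dissectionBlock c i ∪ dissectionBlock c j) := by
  intro e he
  obtain ⟨k, hk⟩ := exists_mem_dissectionBlock (hD he)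
  by_cases hsub : dissectionBlock c k ⊆ Icc a b
  · exact mem_union_left _ (mem_biUnion.2 ⟨k, mem_filter.2 ⟨mem_univ _, hsub⟩, hk⟩)
  · refine mem_union_right _ ?_
    rcases mem_Ioc_left_or_right_of_not_subset_Icc hk he hsub with ha | hb
    · exact mem_union_left _ (hc.eq_of_mem_dissectionBlock ha hi ▸ hk)
    · exact mem_union_right _ (hc.eq_of_mem_dissectionBlock hb hj ▸ hk)

theorem sum_Icc_le_sum_innerBlocks_add {R : Type*} [AddCommMonoid R] [PartialOrder R]
    [IsOrderedAddMonoid R] (hc : Monotone c) (hab : a ≤ b)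
    (hD : Icc a b ⊆ Ioc (c 0) (c (Fin.last γ))) {w : ℕ → R} (hw : ∀ e, 0 ≤ w e) {m : R}
    (hm : ∀ i, ∑ e ∈ dissectionBlock c i, w e = m) :
    ∑ e ∈ Icc a b, w e ≤
      ∑ e ∈ (innerBlocks (dissectionBlock c) (Icc a b)).biUnion (dissectionBlock c), w e +
        (m + m) := by
  obtain ⟨i, hi⟩ := exists_mem_dissectionBlock (hD (left_mem_Icc.2 hab))
  obtain ⟨j, hj⟩ := exists_mem_dissectionBlock (hD (right_mem_Icc.2 hab))
  set Ds := (innerBlocks (dissectionBlock c) (Icc a b)).biUnion (dissectionBlock c)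
  calc ∑ e ∈ Icc a b, w e
      ≤ ∑ e ∈ Ds ∪ (dissectionBlock c i ∪ dissectionBlock c j), w e :=
        sum_le_sum_of_subset_of_nonneg (Icc_subset_biUnion_innerBlocks_union hc hD hi hj)
          fun e _ _ => hw e
    _ ≤ ∑ e ∈ Ds, w e + ∑ e ∈ dissectionBlock c i ∪ dissectionBlock c j, w e :=
        sum_union_le_sum_add_sum hw _ _
    _ ≤ ∑ e ∈ Ds, w e + (m + m) := by
        grw [sum_union_le_sum_add_sum hw, hm, hm]

end Dissection

theorem maxfs_good_driver_violation_general (ε : ℚ) (hε : 0 < ε)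
    (δ : ℕ) (hδε : (δ : ℚ) = 1 / (2 * ε))
    (N γ : ℕ)
    (c : Fin (γ + 1) → ℕ) (hc0 : c 0 = 0) (hclast : c (Fin.last γ) = N)
    (hmono : StrictMono c)
    (P : Fin γ → Finset ℕ)
    (hP : ∀ i : Fin γ, P i = Finset.Ioc (c i.castSucc) (c i.succ))
    (w : ℕ → ℚ) (hw : ∀ e, 0 ≤ w e)
    (W : ℚ) (hW : 0 ≤ W)
    (hblocks : ∀ i, ∑ e ∈ P i, w e = W / γ)
    (a bnd : ℕ) (ha : 1 ≤ a) (hbnd : bnd ≤ N)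
    (n : ℕ)
    (hn : n = (Finset.univ.filter (fun i => P i ⊆ Finset.Icc a bnd)).card)
    (hgood : δ ≤ n)
    (Ds : Finset ℕ)
    (hDs : Ds = (Finset.univ.filter (fun i => P i ⊆ Finset.Icc a bnd)).biUnion P)
    (ℓ' u : ℚ)
    (hlo : ℓ' / (1 + 4 * ε) ≤ ∑ e ∈ Ds, w e)
    (hhi : ∑ e ∈ Ds, w e ≤ u) :
    ℓ' / (1 + 4 * ε) ≤ ∑ e ∈ Finset.Icc a bnd, w e ∧
      ∑ e ∈ Finset.Icc a bnd, w e ≤ (1 + 4 * ε) * u := by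
  obtain rfl : P = dissectionBlock c := funext hP
  change n = #(innerBlocks _ _) at hn
  change Ds = (innerBlocks _ _).biUnion _ at hDs
  have hDs_nonneg : 0 ≤ ∑ e ∈ Ds, w e := sum_nonneg fun e _ => hw e
  have hboundary : 2 * (W / γ) ≤ 4 * ε * ∑ e ∈ Ds, w e := by
    rw [hDs, sum_biUnion_dissectionBlock hmono.monotone _ hblocks, ← hn, nsmul_eq_mul]
    have h4εδ : 4 * ε * δ = 2 := by rw [hδε]; field_simp; norm_num
    calc 2 * (W / γ) = 4 * ε * δ * (W / γ) := by rw [h4εδ]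
      _ ≤ 4 * ε * (n * (W / γ)) := by rw [← mul_assoc]; gcongr
  refine ⟨hlo.trans (sum_le_sum_of_subset_of_nonneg (hDs ▸ biUnion_innerBlocks_subset _ _)
    fun e _ _ => hw e), ?_⟩
  rcases le_or_gt a bnd with hab | hba
  · have hD : Icc a bnd ⊆ Ioc (c 0) (c (Fin.last γ)) := fun e he => by
      rw [mem_Icc] at he; rw [mem_Ioc, hc0, hclast]; omega
    calc ∑ e ∈ Icc a bnd, w e ≤ ∑ e ∈ Ds, w e + 2 * (W / γ) := by
          rw [hDs, two_mul]; exact sum_Icc_le_sum_innerBlocks_add hmono.monotone hab hD hw hblocks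
      _ ≤ (1 + 4 * ε) * ∑ e ∈ Ds, w e := by linarith
      _ ≤ (1 + 4 * ε) * u := by gcongr
  · rw [Icc_eq_empty_of_lt hba, sum_empty]
    exact mul_nonneg (by positivity) (hDs_nonneg.trans hhi)

/-- MaxFS scaling lemma: if the shortened driver `D^s` (union of the dissection
blocks fully contained in the interval `D = [a,bnd]`) approximately satisfies
its two-sided constraint, and `D` is good (contains `n ≥ δ = 1/(2ε)` full
blocks of weight `W/γ` each), then the full driver satisfies the constraint up
to a factor `1+4ε` on each side. -/
theorem maxfs_good_driver_violation (ε : ℚ) (hε : 0 < ε)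
    (δ : ℕ) (hδ : 0 < δ) (hδε : (δ : ℚ) = 1 / (2 * ε))
    (N γ : ℕ) (hN : 1 ≤ N) (hγ : 1 ≤ γ)
    (c : Fin (γ + 1) → ℕ) (hc0 : c 0 = 0) (hclast : c (Fin.last γ) = N)
    (hmono : StrictMono c)
    (P : Fin γ → Finset ℕ)
    (hP : ∀ i : Fin γ, P i = Finset.Ioc (c i.castSucc) (c i.succ))
    (w : ℕ → ℚ) (hw : ∀ e, 0 ≤ w e)
    (W : ℚ) (hW : 0 ≤ W)
    (hblocks : ∀ i, ∑ e ∈ P i, w e = W / γ)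
    (a bnd : ℕ) (ha : 1 ≤ a) (hbnd : bnd ≤ N)
    (n : ℕ)
    (hn : n = (Finset.univ.filter (fun i => P i ⊆ Finset.Icc a bnd)).card)
    (hgood : δ ≤ n)
    (Ds : Finset ℕ)
    (hDs : Ds = (Finset.univ.filter (fun i => P i ⊆ Finset.Icc a bnd)).biUnion P)
    (ℓ' u : ℚ) (hℓ' : 0 ≤ ℓ')
    (hlo : ℓ' / (1 + 4 * ε) ≤ ∑ e ∈ Ds, w e)
    (hhi : ∑ e ∈ Ds, w e ≤ u) :
    ℓ' / (1 + 4 * ε) ≤ ∑ e ∈ Finset.Icc a bnd, w e ∧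
      ∑ e ∈ Finset.Icc a bnd, w e ≤ (1 + 4 * ε) * u :=
  maxfs_good_driver_violation_general ε hε δ hδε N γ c hc0 hclast hmono P hP w hw W hW hblocks a bnd
    ha hbnd n hn hgood Ds hDs ℓ' u hlo hhi
end

section
/- Let a_1,…,a_m ∈ {0,1}^n be vectors in each of which the 1-entries occupy consecutive coordinates, and let 0 ≤ ℓ_j ≤ u_j be rational bounds for j = 1,…,m; set ℓ_max := max_j ℓ_j. For any w ∈ ℚ≥0^n define w' ∈ ℚ≥0^n by w'(e) := min(w(e), ℓ_max) for each coordinate e. Then every index j satisfying ℓ_j ≤ a_j^T w ≤ u_j also satisfies ℓ_j ≤ a_j^T w' ≤ u_j. -/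
/-- Capping the weights of a MaxFS solution at `ℓ_max` does not un-satisfy any
satisfied constraint of an interval matrix. -/
theorem maxfs_cap_weights (m n : ℕ) (a : Fin m → Fin n → ℚ)
    (h01 : ∀ j e, a j e = 0 ∨ a j e = 1)
    (hconsec : ∀ j, ∀ e f g : Fin n, e ≤ f → f ≤ g →
      a j e = 1 → a j g = 1 → a j f = 1)
    (ℓ u : Fin m → ℚ) (hlu : ∀ j, 0 ≤ ℓ j ∧ ℓ j ≤ u j)
    (ℓmax : ℚ) (hub : ∀ j, ℓ j ≤ ℓmax) (hattained : ∃ j, ℓmax = ℓ j)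
    (w : Fin n → ℚ) (hw : ∀ e, 0 ≤ w e)
    (w' : Fin n → ℚ) (hw' : ∀ e, w' e = min (w e) ℓmax)
    (j : Fin m)
    (hsat : ℓ j ≤ ∑ e, a j e * w e ∧ ∑ e, a j e * w e ≤ u j) :
    ℓ j ≤ ∑ e, a j e * w' e ∧ ∑ e, a j e * w' e ≤ u j := by
  have hℓmax0 : 0 ≤ ℓmax := by
    obtain ⟨j0, hj0⟩ := hattained
    exact hj0 ▸ (hlu j0).1
  have ha0 : ∀ e, 0 ≤ a j e := fun e => by rcases h01 j e with h | h <;> simp [h]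
  have hw'0 : ∀ e, 0 ≤ w' e := fun e => by
    rw [hw' e]; exact le_min (hw e) hℓmax0
  have hterm0 : ∀ e, 0 ≤ a j e * w' e := fun e => mul_nonneg (ha0 e) (hw'0 e)
  constructor
  · by_cases hcase : ∃ e, a j e = 1 ∧ ℓmax ≤ w e
    · obtain ⟨e0, he1, he2⟩ := hcase
      have h1 : a j e0 * w' e0 = ℓmax := by
        rw [he1, hw' e0, one_mul, min_eq_right he2]
      calc ℓ j ≤ ℓmax := hub j
        _ = a j e0 * w' e0 := h1.symm
        _ ≤ ∑ e, a j e * w' e :=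
          Finset.single_le_sum (fun e _ => hterm0 e) (Finset.mem_univ e0)
    · push_neg at hcase
      have heq : ∑ e, a j e * w' e = ∑ e, a j e * w e := by
        refine Finset.sum_congr rfl fun e _ => ?_
        rcases h01 j e with h | h
        · simp [h]
        · rw [hw' e, min_eq_left (le_of_lt (hcase e h))]
      rw [heq]; exact hsat.1
  · refine le_trans (Finset.sum_le_sum fun e _ => ?_) hsat.2
    exact mul_le_mul_of_nonneg_left (by rw [hw' e]; exact min_le_left _ _) (ha0 e)
end

section
/- Let K ≥ 4 be an even integer, γ := K^K, ℓ ≥ 1 an integer, and W* := γ^ℓ. Let s ≥ 0 and L ≥ 1 be integers with s + L ≤ W*. Choose x uniformly at random from {1,…,W*} and, independently, y uniformly at random from {1,…,K}; set W' := W*·K^y and α_q := W'/γ^q for q = 0,…,ℓ. For q ∈ {0,…,ℓ}, the level-q blocks are the integer intervals ((j−1)·α_q, j·α_q] for j = 1,…,W'/α_q. Define the level of the shifted interval I := (s+x, s+x+L] as the largest q ∈ {0,…,ℓ} such that I is contained in a single level-q block, and call I good if either its level equals ℓ, or its level equals some q < ℓ and at least K/2 of the level-(q+1) blocks are entirely contained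 in I. Then the probability that I is good is at least 1 − 3/K. -/
/-!
If the shifted interval is not good, its level `v` is below `ℓ`, so some multiple of
`α = α_{v+1}` lies strictly inside it, and it contains fewer than `K/2` blocks of size `α`, so
`L < (K/2 + 2) α ≤ K α`. Every block size is a power `K^m` with `m = K (ℓ - v - 1) + y ≤ K ℓ`,
and `m` determines `y`. For a fixed `m`, at most a fraction `min (1, L / K^m)` of the shifts `x`
put a multiple of `K^m` inside the interval, because `K^m` divides `W*`. Summing over the `m` with
`L < K^(m+1)` bounds the bad pairs `(x, y)` by `3 W*` out of `K W*`.
-/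

open Finset

/-- The interval `(t, t + L]` has a multiple of `α` strictly inside it. -/
def IsCut (α t L : ℕ) : Prop := α < t % α + L

instance (α t L : ℕ) : Decidable (IsCut α t L) := Nat.decLt _ _

theorem exists_block_of_not_isCut {α N t L : ℕ} (hα : 0 < α) (hN : t + L < N * α)
    (hcut : ¬ IsCut α t L) :
    ∃ j, 1 ≤ j ∧ j ≤ N ∧ (j - 1) * α ≤ t ∧ t + L ≤ j * α := by
  unfold IsCut at hcut
  have hdiv := Nat.div_add_mod t α
  refine ⟨t / α + 1, le_add_self, (Nat.div_lt_iff_lt_mul hα).2 (by omega),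
    by simpa using Nat.div_mul_le_self t α, by rw [add_mul]; linarith⟩

theorem le_card_filter_blocks {α N t L d : ℕ} (hα : 0 < α) (hN : t + L ≤ N * α)
    (hL : (d + 2) * α ≤ L) :
    d ≤ #{j ∈ Icc 1 N | t ≤ (j - 1) * α ∧ j * α ≤ t + L} := by
  obtain ⟨u, hu, hu'⟩ : ∃ u, u * α ≤ t ∧ t < u * α + α :=
    ⟨t / α, Nat.div_mul_le_self t α, Nat.lt_div_mul_add hα⟩
  calc d = #(Icc (u + 2) (u + d + 1)) := by simp
    _ ≤ _ := card_le_card fun j hj => by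
      rw [mem_Icc] at hj
      have hjα : j * α ≤ t + L := by
        calc j * α ≤ (u + d + 1) * α := Nat.mul_le_mul_right _ hj.2
          _ ≤ t + L := by nlinarith
      have hjN : j ≤ N := Nat.le_of_mul_le_mul_right (hjα.trans hN) hα
      have hj1 : (u + 1) * α ≤ (j - 1) * α := Nat.mul_le_mul_right _ (by omega)
      simp only [mem_filter, mem_Icc]
      exact ⟨⟨by omega, hjN⟩, by linarith, hjα⟩

theorem card_filter_isCut_le {α W : ℕ} (s L : ℕ) (hα : 0 < α) (hW : α ∣ W) :
    #{x ∈ Icc 1 W | IsCut α (s + x) L} ≤ W / α * L := by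
  calc #{x ∈ Icc 1 W | IsCut α (s + x) L}
      ≤ #(range (W / α) ×ˢ Ico (α - L) α) := by
        refine card_le_card_of_injOn (fun x => ((x - 1) / α, (s + x) % α)) ?_ ?_
        · intro x hx
          rw [mem_coe, mem_filter, mem_Icc, IsCut] at hx
          dsimp only
          rw [mem_coe, mem_product, mem_range, mem_Ico]
          refine ⟨(Nat.div_lt_iff_lt_mul hα).2 ?_, by omega, Nat.mod_lt _ hα⟩
          rw [Nat.div_mul_cancel hW]; omega
        · intro x hx y hy hxy
          rw [mem_coe, mem_filter, mem_Icc] at hx hy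
          simp only [Prod.mk.injEq] at hxy
          have hmod : (x - 1) % α = (y - 1) % α := by
            have : s + 1 + (x - 1) ≡ s + 1 + (y - 1) [MOD α] := by
              rw [show s + 1 + (x - 1) = s + x by omega, show s + 1 + (y - 1) = s + y by omega]
              exact hxy.2
            exact Nat.ModEq.add_left_cancel' _ this
          have := Nat.div_add_mod (x - 1) α
          have := Nat.div_add_mod (y - 1) α
          rw [hxy.1, hmod] at *
          omega
    _ ≤ W / α * L := by simp only [card_product, card_range, Nat.card_Ico]; gcongr; omega

section Dissection

/- Level `q` of the dissection consists of the `N q` consecutive blocks `((j - 1) A q, j A q]`. -/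
variable (N A : ℕ → ℕ) (t L : ℕ)

def InBlock (q : ℕ) : Prop :=
  ∃ j : ℕ, 1 ≤ j ∧ j ≤ N q ∧ (j - 1) * A q ≤ t ∧ t + L ≤ j * A q

noncomputable def level (ℓ : ℕ) : ℕ := sSup {q | q ≤ ℓ ∧ InBlock N A t L q}

def IsGood (d ℓ : ℕ) : Prop :=
  level N A t L ℓ = ℓ ∨
    (level N A t L ℓ < ℓ ∧ d ≤
      #{j ∈ Icc 1 (N (level N A t L ℓ + 1)) |
        t ≤ (j - 1) * A (level N A t L ℓ + 1) ∧ j * A (level N A t L ℓ + 1) ≤ t + L})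

variable {N A t L}

theorem exists_isCut_of_not_isGood {d ℓ : ℕ} (hA : ∀ q ≤ ℓ, 0 < A q)
    (hN : ∀ q ≤ ℓ, t + L < N q * A q) (h : ¬ IsGood N A t L d ℓ) :
    ∃ q < ℓ, IsCut (A (q + 1)) t L ∧ L < (d + 2) * A (q + 1) := by
  set v := level N A t L ℓ
  have hv : v < ℓ := lt_of_le_of_ne (csSup_le' fun q hq => hq.1) fun hvℓ => h (Or.inl hvℓ)
  refine ⟨v, hv, ?_, ?_⟩
  · by_contra hcut
    have hin : InBlock N A t L (v + 1) := exists_block_of_not_isCut (hA _ hv) (hN _ hv) hcut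
    have : v + 1 ≤ v := le_csSup ⟨ℓ, fun q hq => hq.1⟩ ⟨hv, hin⟩
    omega
  · by_contra! hlen
    exact h (Or.inr ⟨hv, le_card_filter_blocks (hA _ hv) (hN _ hv).le hlen⟩)

end Dissection

theorem sum_pow_le_of_forall_le {r : ℝ} (h0 : 0 ≤ r) (h1 : r < 1) {S : Finset ℕ} {n : ℕ}
    (hS : ∀ i ∈ S, n ≤ i) : ∑ i ∈ S, r ^ i ≤ r ^ n / (1 - r) := by
  have hsub : S ⊆ Ico n (S.sup id + 1) := fun i hi =>
    mem_Ico.2 ⟨hS i hi, Nat.lt_succ_of_le (le_sup (f := id) hi)⟩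
  exact (sum_le_sum_of_subset_of_nonneg hsub fun _ _ _ => by positivity).trans
    (geom_sum_Ico_le_of_lt_one h0 h1)

/-- The smallest `m` contributes at most `W`, the others a geometric series of ratio `1/K`. -/
theorem sum_le_three_mul {K W L : ℝ} (hK : 2 ≤ K) (hW : 0 ≤ W) (hL : 0 ≤ L) {M : Finset ℕ}
    {f : ℕ → ℝ} (hM : ∀ m ∈ M, L < K ^ (m + 1)) (hfW : ∀ m ∈ M, f m ≤ W)
    (hfL : ∀ m ∈ M, f m ≤ W * L / K ^ m) : ∑ m ∈ M, f m ≤ 3 * W := by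
  rcases M.eq_empty_or_nonempty with rfl | hne
  · simpa using hW
  set m₀ := M.min' hne
  have hr0 : 0 ≤ K⁻¹ := by positivity
  have hr : K⁻¹ ≤ 1 / 2 := by rw [one_div]; exact inv_anti₀ two_pos hK
  have hLr : L * K⁻¹ ^ (m₀ + 1) ≤ 1 := by
    rw [inv_pow, ← div_eq_mul_inv, div_le_one (by positivity)]
    exact (hM _ (M.min'_mem hne)).le
  have hgeom : 1 / (1 - K⁻¹) ≤ 2 := by
    rw [div_le_iff₀ (by linarith)]; linarith
  have htail : ∑ m ∈ M.erase m₀, f m ≤ 2 * W := calc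
    ∑ m ∈ M.erase m₀, f m ≤ ∑ m ∈ M.erase m₀, W * L * K⁻¹ ^ m := sum_le_sum fun m hm => by
        rw [inv_pow, ← div_eq_mul_inv]; exact hfL m (mem_of_mem_erase hm)
    _ = W * L * ∑ m ∈ M.erase m₀, K⁻¹ ^ m := (mul_sum _ _ _).symm
    _ ≤ W * L * (K⁻¹ ^ (m₀ + 1) / (1 - K⁻¹)) := by
        gcongr
        exact sum_pow_le_of_forall_le hr0 (by linarith) fun m hm =>
          M.min'_lt_of_mem_erase_min' hne hm
    _ = W * (L * K⁻¹ ^ (m₀ + 1)) * (1 / (1 - K⁻¹)) := by ring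
    _ ≤ W * 1 * 2 := by
        have : 0 ≤ 1 / (1 - K⁻¹) := by rw [one_div, inv_nonneg]; linarith
        gcongr
    _ = 2 * W := by ring
  rw [← add_sum_erase M f (M.min'_mem hne)]
  linarith [hfW _ (M.min'_mem hne)]

/-- The block size `α_q = W' / γ^q` of the highway dissection. -/
theorem blockSize_eq {K : ℕ} (hK : 0 < K) {ℓ q : ℕ} (y : ℕ) (hq : q ≤ ℓ) :
    (K ^ K) ^ ℓ * K ^ y / (K ^ K) ^ q = K ^ (K * (ℓ - q) + y) := by
  rw [← Nat.add_sub_cancel' hq, pow_add, mul_assoc, Nat.mul_div_cancel_left _ (by positivity),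
    Nat.add_sub_cancel_left, pow_add, pow_mul]

theorem exists_scale_of_not_isGood {K ℓ s L x y : ℕ} (hK : 3 ≤ K) (hsL : s + L ≤ (K ^ K) ^ ℓ)
    (hx : x ≤ (K ^ K) ^ ℓ) (hy : y ∈ Icc 1 K)
    (h : ¬ IsGood (fun q => (K ^ K) ^ q) (fun q => (K ^ K) ^ ℓ * K ^ y / (K ^ K) ^ q)
      (s + x) L (K / 2) ℓ) :
    ∃ m ≤ K * ℓ, L < K ^ (m + 1) ∧ IsCut (K ^ m) (s + x) L ∧ y = (m - 1) % K + 1 := by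
  have hK0 : 0 < K := by omega
  rw [mem_Icc] at hy
  have hW : 0 < (K ^ K) ^ ℓ := by positivity
  have hKy : 3 ≤ K ^ y := hK.trans (Nat.le_self_pow (by omega) K)
  have hN : ∀ q ≤ ℓ, s + x + L < (K ^ K) ^ q * ((K ^ K) ^ ℓ * K ^ y / (K ^ K) ^ q) :=
    fun q hq => by
      rw [Nat.mul_div_cancel' (dvd_mul_of_dvd_left (pow_dvd_pow _ hq) _)]
      nlinarith
  obtain ⟨q, hq, hcut, hlen⟩ :=
    exists_isCut_of_not_isGood (fun q hq => by rw [blockSize_eq hK0 y hq]; positivity) hN h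
  rw [blockSize_eq hK0 y hq] at hcut hlen
  refine ⟨K * (ℓ - (q + 1)) + y, ?_, ?_, hcut, ?_⟩
  · calc K * (ℓ - (q + 1)) + y ≤ K * (ℓ - (q + 1) + 1) := by rw [mul_add_one]; omega
      _ ≤ K * ℓ := Nat.mul_le_mul_left _ (by omega)
  · calc L < (K / 2 + 2) * K ^ (K * (ℓ - (q + 1)) + y) := hlen
      _ ≤ K * K ^ (K * (ℓ - (q + 1)) + y) := Nat.mul_le_mul_right _ (by omega)
      _ = K ^ (K * (ℓ - (q + 1)) + y + 1) := (pow_succ' _ _).symm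
  · rw [Nat.add_sub_assoc hy.1, Nat.mul_add_mod, Nat.mod_eq_of_lt (by omega)]
    omega

open Classical in
theorem card_not_isGood_le {K ℓ s L : ℕ} (hK : 3 ≤ K) (hsL : s + L ≤ (K ^ K) ^ ℓ) :
    (#{p ∈ Icc 1 ((K ^ K) ^ ℓ) ×ˢ Icc 1 K | ¬ IsGood (fun q => (K ^ K) ^ q)
      (fun q => (K ^ K) ^ ℓ * K ^ p.2 / (K ^ K) ^ q) (s + p.1) L (K / 2) ℓ} : ℝ) ≤
      3 * ((K ^ K) ^ ℓ : ℕ) := by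
  set W := (K ^ K) ^ ℓ
  set M := {m ∈ range (K * ℓ + 1) | L < K ^ (m + 1)}
  set C : ℕ → Finset ℕ := fun m => {x ∈ Icc 1 W | IsCut (K ^ m) (s + x) L}
  have hsub : {p ∈ Icc 1 W ×ˢ Icc 1 K | ¬ IsGood (fun q => (K ^ K) ^ q)
      (fun q => (K ^ K) ^ ℓ * K ^ p.2 / (K ^ K) ^ q) (s + p.1) L (K / 2) ℓ} ⊆
      M.biUnion fun m => C m ×ˢ {(m - 1) % K + 1} := by
    rintro ⟨x, y⟩ hp
    rw [mem_filter, mem_product] at hp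
    obtain ⟨⟨hx, hy⟩, hbad⟩ := hp
    obtain ⟨m, hmℓ, hLm, hcut, rfl⟩ :=
      exists_scale_of_not_isGood hK hsL (mem_Icc.1 hx).2 hy hbad
    exact mem_biUnion.2 ⟨m, mem_filter.2 ⟨mem_range.2 (by omega), hLm⟩,
      mem_product.2 ⟨mem_filter.2 ⟨hx, hcut⟩, mem_singleton_self _⟩⟩
  have hdvd : ∀ m ∈ M, K ^ m ∣ W := fun m hm => by
    rw [show W = K ^ (K * ℓ) from (pow_mul K K ℓ).symm]
    exact pow_dvd_pow _ (by simp [M] at hm; omega)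
  calc _ ≤ (∑ m ∈ M, #(C m) : ℝ) := by
        exact_mod_cast (card_le_card hsub).trans (card_biUnion_le.trans (by simp))
    _ ≤ 3 * W := by
      refine sum_le_three_mul (K := K) (L := L) (by norm_cast; omega) (by positivity)
        (by positivity) (fun m hm => by exact_mod_cast (mem_filter.1 hm).2)
        (fun m _ => by exact_mod_cast (card_filter_le _ _).trans (by simp)) fun m hm => ?_
      rw [mul_div_right_comm, ← Nat.cast_pow, ← Nat.cast_div (hdvd m hm) (by positivity)]
      exact_mod_cast card_filter_isCut_le s L (by positivity) (hdvd m hm)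

open Classical in
theorem card_isGood_ge {K ℓ s L : ℕ} (hK : 3 ≤ K) (hsL : s + L ≤ (K ^ K) ^ ℓ) :
    ((K : ℝ) ^ K) ^ ℓ * K - 3 * ((K : ℝ) ^ K) ^ ℓ ≤
      #{p ∈ Icc 1 ((K ^ K) ^ ℓ) ×ˢ Icc 1 K | IsGood (fun q => (K ^ K) ^ q)
        (fun q => (K ^ K) ^ ℓ * K ^ p.2 / (K ^ K) ^ q) (s + p.1) L (K / 2) ℓ} := by
  have hsplit := card_filter_add_card_filter_not (s := Icc 1 ((K ^ K) ^ ℓ) ×ˢ Icc 1 K)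
    fun p => IsGood (fun q => (K ^ K) ^ q)
      (fun q => (K ^ K) ^ ℓ * K ^ p.2 / (K ^ K) ^ q) (s + p.1) L (K / 2) ℓ
  rw [card_product, Nat.card_Icc, Nat.card_Icc, Nat.add_sub_cancel, Nat.add_sub_cancel] at hsplit
  have hsplitℝ := congrArg (Nat.cast : ℕ → ℝ) hsplit
  have hbad := card_not_isGood_le hK hsL
  push_cast at hsplitℝ hbad
  linarith

open Classical in
theorem goodness_lemma_general (K ℓ s L : ℕ) (hK : 4 ≤ K)
    (hsL : s + L ≤ (K ^ K) ^ ℓ) :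
    1 - 3 / (K : ℝ) ≤
      ((((Finset.Icc 1 ((K ^ K) ^ ℓ)) ×ˢ (Finset.Icc 1 K)).filter
        (fun p : ℕ × ℕ =>
          let γ : ℕ := K ^ K
          let W' : ℕ := γ ^ ℓ * K ^ p.2
          let A : ℕ → ℕ := fun q => W' / γ ^ q
          let contained : ℕ → Prop := fun q =>
            ∃ j : ℕ, 1 ≤ j ∧ j ≤ γ ^ q ∧
              (j - 1) * A q ≤ s + p.1 ∧ s + p.1 + L ≤ j * A q
          let level : ℕ := sSup {q | q ≤ ℓ ∧ contained q}
          level = ℓ ∨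
            (level < ℓ ∧ K / 2 ≤
              ((Finset.Icc 1 (γ ^ (level + 1))).filter
                (fun j => s + p.1 ≤ (j - 1) * A (level + 1) ∧
                  j * A (level + 1) ≤ s + p.1 + L)).card))).card : ℝ)
        / ((((K : ℝ) ^ K) ^ ℓ) * (K : ℝ)) := by
  have hgood := card_isGood_ge (by omega : 3 ≤ K) hsL
  rw [le_div_iff₀ (by positivity)]
  calc (1 - 3 / (K : ℝ)) * (((K : ℝ) ^ K) ^ ℓ * K)
      = ((K : ℝ) ^ K) ^ ℓ * K - 3 * ((K : ℝ) ^ K) ^ ℓ := by field_simp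
    _ ≤ _ := by
      convert hgood using 4
      exact Iff.rfl

open Classical in
theorem goodness_lemma (K ℓ s L : ℕ) (hK : 4 ≤ K) (hKeven : 2 ∣ K)
    (hℓ : 1 ≤ ℓ) (hL : 1 ≤ L) (hsL : s + L ≤ (K ^ K) ^ ℓ) :
    1 - 3 / (K : ℝ) ≤
      ((((Finset.Icc 1 ((K ^ K) ^ ℓ)) ×ˢ (Finset.Icc 1 K)).filter
        (fun p : ℕ × ℕ =>
          let γ : ℕ := K ^ K
          let W' : ℕ := γ ^ ℓ * K ^ p.2
          let A : ℕ → ℕ := fun q => W' / γ ^ q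
          let contained : ℕ → Prop := fun q =>
            ∃ j : ℕ, 1 ≤ j ∧ j ≤ γ ^ q ∧
              (j - 1) * A q ≤ s + p.1 ∧ s + p.1 + L ≤ j * A q
          let level : ℕ := sSup {q | q ≤ ℓ ∧ contained q}
          level = ℓ ∨
            (level < ℓ ∧ K / 2 ≤
              ((Finset.Icc 1 (γ ^ (level + 1))).filter
                (fun j => s + p.1 ≤ (j - 1) * A (level + 1) ∧
                  j * A (level + 1) ≤ s + p.1 + L)).card))).card : ℝ)
        / ((((K : ℝ) ^ K) ^ ℓ) * (K : ℝ)) :=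
  goodness_lemma_general K ℓ s L hK hsL
end
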